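/- arXiv:2001.02194 — 12 statements merged into one kernel-verified Lean document; each statement's English description precedes it below -/
import Mathlib

section
/- Let C be a closed convex subset of a real Hilbert space H, {xₙ} a sequence in H, u ∈ H, and q the metric projection of u onto C. If every weak subsequential limit of {xₙ} lies in C and ‖xₙ − u‖ ≤ ‖u − q‖ for all n, then xₙ converges strongly to q. -/
/-!
Expanding the square, `‖xₙ - u‖ ≤ ‖u - q‖` says `‖xₙ - q‖² ≤ 2⟪u - q, xₙ - q⟫`, so it suffices
that `limsup ⟪u - q, xₙ - q⟫ ≤ 0`. The sequence is bounded, hence every subsequence has a weakly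
convergent subsequence (sequential Banach–Alaoglu on the closed span of the sequence, which is
separable, through the Riesz representation). Its weak limit `z` lies in `C`, where the
variational inequality of the projection gives `⟪u - q, z - q⟫ ≤ 0`.
-/

open Filter Topology TopologicalSpace RealInnerProductSpace InnerProductSpace

section

variable {H : Type*} [NormedAddCommGroup H] [InnerProductSpace ℝ H]

/-- `ω_w(x)`. -/
def weakSubseqLimits (x : ℕ → H) : Set H :=
  {z | ∃ φ : ℕ → ℕ, StrictMono φ ∧
    ∀ f : H →L[ℝ] ℝ, Tendsto (fun n => f (x (φ n))) atTop (𝓝 (f z))}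

lemma weakSubseqLimits_comp_subset (x : ℕ → H) {ψ : ℕ → ℕ} (hψ : StrictMono ψ) :
    weakSubseqLimits (x ∘ ψ) ⊆ weakSubseqLimits x := by
  rintro z ⟨φ, hφ, hlim⟩
  exact ⟨ψ ∘ φ, hψ.comp hφ, hlim⟩

lemma weakSubseqLimits_nonempty_of_bounded [CompleteSpace H] {x : ℕ → H} {R : ℝ}
    (hR : ∀ n, ‖x n‖ ≤ R) : (weakSubseqLimits x).Nonempty := by
  set K : Submodule ℝ H := (Submodule.span ℝ (Set.range x)).topologicalClosure
  have hxK (n : ℕ) : x n ∈ K :=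
    Submodule.le_topologicalClosure _ (Submodule.subset_span ⟨n, rfl⟩)
  have : CompleteSpace K := (Submodule.isClosed_topologicalClosure _).completeSpace_coe
  have : SeparableSpace K :=
    ((Set.countable_range x).isSeparable.span (R := ℝ)).closure.separableSpace
  let y (n : ℕ) : WeakDual ℝ K := StrongDual.toWeakDual (toDual ℝ K ⟨x n, hxK n⟩)
  have hy (n : ℕ) : y n ∈ WeakDual.toStrongDual ⁻¹' Metric.closedBall 0 R :=
    (mem_closedBall_zero_iff.2 (by simpa using hR n) :
      toDual ℝ K ⟨x n, hxK n⟩ ∈ Metric.closedBall 0 R)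
  obtain ⟨g, -, φ, hφ, hg⟩ := WeakDual.isSeqCompact_closedBall ℝ K 0 R hy
  refine ⟨((toDual ℝ K).symm (WeakDual.toStrongDual g) : H), φ, hφ, fun f => ?_⟩
  set k := (toDual ℝ K).symm (f.comp K.subtypeL)
  have hfK (v : K) : f v = ⟪k, v⟫ := by
    rw [toDual_symm_apply]; rfl
  have hgk := ((WeakDual.eval_continuous k).tendsto g).comp hg
  convert hgk using 1
  · ext n
    simp [y, hfK ⟨x (φ n), hxK (φ n)⟩, real_inner_comm]
  · rw [hfK, real_inner_comm, toDual_symm_apply]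
    rfl

lemma real_inner_sub_le_zero_of_forall_norm_sub_le {C : Set H} (hC : Convex ℝ C) {u q : H}
    (hqC : q ∈ C) (hq : ∀ y ∈ C, ‖u - q‖ ≤ ‖u - y‖) : ∀ w ∈ C, ⟪u - q, w - q⟫ ≤ 0 := by
  have : Nonempty C := ⟨⟨q, hqC⟩⟩
  refine (norm_eq_iInf_iff_real_inner_le_zero hC hqC).1 <|
    le_antisymm (le_ciInf fun w => hq w w.2) ?_
  exact ciInf_le ⟨0, fun _ ⟨w, hw⟩ => hw ▸ norm_nonneg _⟩ (⟨q, hqC⟩ : C)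

lemma norm_sq_le_two_mul_inner_of_norm_sub_le {a b : H} (h : ‖a - b‖ ≤ ‖b‖) :
    ‖a‖ ^ 2 ≤ 2 * ⟪b, a⟫ := by
  have := pow_le_pow_left₀ (norm_nonneg _) h 2
  rw [norm_sub_sq_real, real_inner_comm] at this
  linarith

lemma eventually_inner_lt_of_forall_mem_weakSubseqLimits [CompleteSpace H] {x : ℕ → H} {R : ℝ}
    (hR : ∀ n, ‖x n‖ ≤ R) {v : H} {c : ℝ} (hc : ∀ z ∈ weakSubseqLimits x, ⟪v, z⟫ ≤ c)
    {ε : ℝ} (hε : 0 < ε) : ∀ᶠ n in atTop, ⟪v, x n⟫ < c + ε := by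
  by_contra hfreq
  obtain ⟨ψ, hψ, hψε⟩ := extraction_of_frequently_atTop (not_eventually.1 hfreq)
  obtain ⟨z, φ, hφ, hz⟩ := weakSubseqLimits_nonempty_of_bounded (fun n => hR (ψ n))
  have hzx : z ∈ weakSubseqLimits x := weakSubseqLimits_comp_subset x hψ ⟨φ, hφ, hz⟩
  have hle : c + ε ≤ ⟪v, z⟫ :=
    ge_of_tendsto (hz (innerSL ℝ v)) (Eventually.of_forall fun n => not_lt.1 (hψε (φ n)))
  linarith [hc z hzx]

end

theorem strong_convergence_to_projection_general
    {H : Type*} [NormedAddCommGroup H] [InnerProductSpace ℝ H] [CompleteSpace H]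
    (C : Set H) (hCconv : Convex ℝ C)
    (x : ℕ → H) (u q : H) (hqC : q ∈ C)
    (hq : ∀ y ∈ C, ‖u - q‖ ≤ ‖u - y‖)
    (hweak : ∀ z : H, ∀ φ : ℕ → ℕ, StrictMono φ →
      (∀ f : H →L[ℝ] ℝ,
        Filter.Tendsto (fun n => f (x (φ n))) Filter.atTop (nhds (f z))) →
      z ∈ C)
    (hbound : ∀ n, ‖x n - u‖ ≤ ‖u - q‖) :
    Filter.Tendsto x Filter.atTop (nhds q) := by
  have hproj := real_inner_sub_le_zero_of_forall_norm_sub_le hCconv hqC hq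
  have hR (n : ℕ) : ‖x n‖ ≤ ‖u - q‖ + ‖u‖ := by
    linarith [norm_le_norm_add_norm_sub' (x n) u, hbound n]
  have hωC : weakSubseqLimits x ⊆ C := fun z ⟨φ, hφ, hz⟩ => hweak z φ hφ hz
  have hlimits : ∀ z ∈ weakSubseqLimits x, ⟪u - q, z⟫ ≤ ⟪u - q, q⟫ := by
    intro z hz
    have := hproj z (hωC hz)
    rw [inner_sub_right] at this
    linarith
  refine Metric.tendsto_nhds.2 fun ε hε => ?_
  filter_upwards [eventually_inner_lt_of_forall_mem_weakSubseqLimits hR hlimits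
    (by positivity : 0 < ε ^ 2 / 2)] with n hn
  have hsq := norm_sq_le_two_mul_inner_of_norm_sub_le (a := x n - q) (b := u - q)
    (by rw [sub_sub_sub_cancel_right]; exact hbound n)
  rw [inner_sub_right] at hsq
  rw [dist_eq_norm]
  exact lt_of_pow_lt_pow_left₀ 2 hε.le (by linarith)

theorem strong_convergence_to_projection
    {H : Type*} [NormedAddCommGroup H] [InnerProductSpace ℝ H] [CompleteSpace H]
    (C : Set H) (hC : IsClosed C) (hCconv : Convex ℝ C) (hCne : C.Nonempty)
    (x : ℕ → H) (u q : H) (hqC : q ∈ C)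
    (hq : ∀ y ∈ C, ‖u - q‖ ≤ ‖u - y‖)
    (hweak : ∀ z : H, ∀ φ : ℕ → ℕ, StrictMono φ →
      (∀ f : H →L[ℝ] ℝ,
        Filter.Tendsto (fun n => f (x (φ n))) Filter.atTop (nhds (f z))) →
      z ∈ C)
    (hbound : ∀ n, ‖x n - u‖ ≤ ‖u - q‖) :
    Filter.Tendsto x Filter.atTop (nhds q) :=
  strong_convergence_to_projection_general C hCconv x u q hqC hq hweak hbound
end

section
/- Let C be a nonempty closed convex subset of a real Hilbert space H and T a κ-strict pseudo-contraction of C into itself with 0 ≤ κ < 1. For x ∈ C, α ∈ (0,1], set y = (1−α)x + αTx. Then every fixed point p of T satisfies ‖y − p‖² ≤ ‖x − p‖² + α(κ − (1 − α))‖x − Tx‖². -/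
/-!
With `u = x - p` and `v = x - T x` we have `T x - p = u - v` and `y - p = u - α • v`.
The strict pseudo-contraction inequality at the pair `(x, p)` reads
`‖u - v‖² ≤ ‖u‖² + κ ‖v‖²`, i.e. `(1 - κ) ‖v‖² ≤ 2 ⟪u, v⟫`; expanding `‖u - α • v‖²`
and inserting this lower bound on the inner product gives the estimate.
-/

section RealInnerProductSpace

variable {H : Type*} [NormedAddCommGroup H] [InnerProductSpace ℝ H]

theorem one_sub_mul_norm_sq_le_two_mul_inner {u v : H} {κ : ℝ}
    (h : ‖u - v‖ ^ 2 ≤ ‖u‖ ^ 2 + κ * ‖v‖ ^ 2) :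
    (1 - κ) * ‖v‖ ^ 2 ≤ 2 * inner ℝ u v := by
  rw [norm_sub_sq_real] at h
  linarith

theorem norm_sub_smul_sq (u v : H) (α : ℝ) :
    ‖u - α • v‖ ^ 2 = ‖u‖ ^ 2 - 2 * α * inner ℝ u v + α ^ 2 * ‖v‖ ^ 2 := by
  rw [norm_sub_sq_real, real_inner_smul_right, norm_smul, Real.norm_eq_abs, mul_pow, sq_abs]
  ring

theorem norm_sub_smul_sq_le_of_norm_sub_sq_le {u v : H} {κ α : ℝ} (hα : 0 ≤ α)
    (h : ‖u - v‖ ^ 2 ≤ ‖u‖ ^ 2 + κ * ‖v‖ ^ 2) :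
    ‖u - α • v‖ ^ 2 ≤ ‖u‖ ^ 2 + α * (κ - (1 - α)) * ‖v‖ ^ 2 := by
  have hinner := mul_le_mul_of_nonneg_left (one_sub_mul_norm_sq_le_two_mul_inner h) hα
  rw [norm_sub_smul_sq]
  linarith

end RealInnerProductSpace

theorem strict_pseudo_contraction_mann_estimate_general
    {H : Type*} [NormedAddCommGroup H] [InnerProductSpace ℝ H]
    (C : Set H)
    (T : H → H)
    (κ : ℝ)
    (hspc : ∀ x ∈ C, ∀ y ∈ C,
      ‖T x - T y‖ ^ 2 ≤ ‖x - y‖ ^ 2 + κ * ‖(x - T x) - (y - T y)‖ ^ 2)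
    (x : H) (hx : x ∈ C) (α : ℝ) (hα0 : 0 < α)
    (y : H) (hy : y = (1 - α) • x + α • T x)
    (p : H) (hp : p ∈ C) (hfix : T p = p) :
    ‖y - p‖ ^ 2 ≤ ‖x - p‖ ^ 2 + α * (κ - (1 - α)) * ‖x - T x‖ ^ 2 := by
  have hxp := hspc x hx p hp
  rw [hfix, sub_self, sub_zero, show T x - p = (x - p) - (x - T x) by abel] at hxp
  have hyp : y - p = (x - p) - α • (x - T x) := by
    rw [hy]
    module
  rw [hyp]
  exact norm_sub_smul_sq_le_of_norm_sub_sq_le hα0.le hxp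

theorem strict_pseudo_contraction_mann_estimate
    {H : Type*} [NormedAddCommGroup H] [InnerProductSpace ℝ H] [CompleteSpace H]
    (C : Set H) (hC : IsClosed C) (hCconv : Convex ℝ C) (hCne : C.Nonempty)
    (T : H → H) (hT : ∀ x ∈ C, T x ∈ C)
    (κ : ℝ) (hκ0 : 0 ≤ κ) (hκ1 : κ < 1)
    (hspc : ∀ x ∈ C, ∀ y ∈ C,
      ‖T x - T y‖ ^ 2 ≤ ‖x - y‖ ^ 2 + κ * ‖(x - T x) - (y - T y)‖ ^ 2)
    (x : H) (hx : x ∈ C) (α : ℝ) (hα0 : 0 < α) (hα1 : α ≤ 1)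
    (y : H) (hy : y = (1 - α) • x + α • T x)
    (p : H) (hp : p ∈ C) (hfix : T p = p) :
    ‖y - p‖ ^ 2 ≤ ‖x - p‖ ^ 2 + α * (κ - (1 - α)) * ‖x - T x‖ ^ 2 :=
  strict_pseudo_contraction_mann_estimate_general C T κ hspc x hx α hα0 y hy p hp hfix
end

section
/- Let C be a nonempty closed convex subset of a real Hilbert space H and T : C → C an L-Lipschitz pseudo-contractive mapping with L ≥ 1. Let α ∈ (0, 1/(L+1)), τ ∈ (0,1], x ∈ C, and set y = (1−α)x + αTx. If u ∈ C satisfies τα[1−(L+1)α]‖x − Tx‖² ≤ ⟨x − u, y − Ty⟩, then ‖x − Tx‖ ≤ (((L+1)α + 1)/(τα[1−(L+1)α]))‖x − u‖. -/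
open RealInnerProductSpace

theorem lipschitz_pseudo_contraction_Cx_subset
    {H : Type*} [NormedAddCommGroup H] [InnerProductSpace ℝ H] [CompleteSpace H]
    (C : Set H) (hC : IsClosed C) (hCconv : Convex ℝ C) (hCne : C.Nonempty)
    (T : H → H) (hT : ∀ x ∈ C, T x ∈ C)
    (L : ℝ) (hL : 1 ≤ L)
    (hLip : ∀ x ∈ C, ∀ y ∈ C, ‖T x - T y‖ ≤ L * ‖x - y‖)
    (hpc : ∀ x ∈ C, ∀ y ∈ C, ⟪T x - T y, x - y⟫ ≤ ‖x - y‖ ^ 2)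
    (α τ : ℝ) (hα0 : 0 < α) (hα1 : α < 1 / (L + 1)) (hτ0 : 0 < τ) (hτ1 : τ ≤ 1)
    (x : H) (hx : x ∈ C) (y : H) (hy : y = (1 - α) • x + α • T x)
    (u : H) (hu : u ∈ C)
    (huC : τ * α * (1 - (L + 1) * α) * ‖x - T x‖ ^ 2 ≤ ⟪x - u, y - T y⟫) :
    ‖x - T x‖ ≤ (((L + 1) * α + 1) / (τ * α * (1 - (L + 1) * α))) * ‖x - u‖ := by
  have hL1 : (0:ℝ) < L + 1 := by linarith
  have hα1' : (L + 1) * α < 1 := by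
    rw [lt_div_iff₀ hL1, mul_comm] at hα1; exact hα1
  have hαle : α ≤ 1 := by nlinarith
  have hc : 0 < τ * α * (1 - (L + 1) * α) := by
    apply mul_pos (mul_pos hτ0 hα0); linarith
  have hyC : y ∈ C := by
    rw [hy]
    exact hCconv hx (hT x hx) (by linarith) (le_of_lt hα0) (by ring)
  set s := ‖x - T x‖ with hs
  have hs0 : 0 ≤ s := norm_nonneg _
  have hyx : ‖y - x‖ = α * s := by
    have : y - x = α • (T x - x) := by rw [hy]; module
    rw [this, norm_smul, Real.norm_eq_abs, abs_of_pos hα0, norm_sub_rev]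
  have hTxy : ‖T x - T y‖ ≤ L * α * s := by
    have := hLip x hx y hyC
    rw [norm_sub_rev x y, hyx] at this
    linarith [this]
  have hkey : ‖y - T y‖ ≤ ((L + 1) * α + 1) * s := by
    have h1 : y - T y = (y - x) + (x - T x) + (T x - T y) := by abel
    calc ‖y - T y‖ ≤ ‖y - x‖ + ‖x - T x‖ + ‖T x - T y‖ := by
          rw [h1]; exact norm_add₃_le
      _ ≤ α * s + s + L * α * s := by rw [hyx]; exact add_le_add_right (le_refl _) _ |>.trans (by linarith)
      _ = ((L + 1) * α + 1) * s := by ring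
  have hinner : ⟪x - u, y - T y⟫ ≤ ‖x - u‖ * (((L + 1) * α + 1) * s) := by
    calc ⟪x - u, y - T y⟫ ≤ ‖x - u‖ * ‖y - T y‖ := real_inner_le_norm _ _
      _ ≤ ‖x - u‖ * (((L + 1) * α + 1) * s) :=
        mul_le_mul_of_nonneg_left hkey (norm_nonneg _)
  have hmain : τ * α * (1 - (L + 1) * α) * s ^ 2 ≤ ‖x - u‖ * (((L + 1) * α + 1) * s) :=
    le_trans huC hinner
  rw [div_mul_eq_mul_div, le_div_iff₀ hc]
  rcases eq_or_lt_of_le hs0 with h0 | h0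
  · have hd : (0:ℝ) ≤ (L + 1) * α + 1 := by nlinarith
    nlinarith [mul_nonneg hd (norm_nonneg (x - u))]
  · nlinarith [norm_nonneg (x - u), mul_pos h0 h0]
end

section
/- Let C be a nonempty closed convex subset of a real Hilbert space H and T : C → C an L-Lipschitz pseudo-contractive mapping with L ≥ 1 and F(T) ≠ ∅. Let α ∈ (0, 1/(L+1)), τ ∈ (0,1], x ∈ C, y = (1−α)x + αTx. If u ∈ C satisfies τ‖α(y − Ty)‖² ≤ 2α⟨x − u, y − Ty⟩, then ‖x − Tx‖ ≤ (2/(τα[1−(L+1)α]))‖x − u‖. -/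
/-!
Put `y = (1 - α) x + α T x`, so that `x - y = α (x - T x)`. Splitting
`x - T x = (x - y) + (y - T y) + (T y - T x)` and using the Lipschitz bound on the last term gives
`(1 - (L + 1) α) ‖x - T x‖ ≤ ‖y - T y‖`. Cauchy–Schwarz in the hypothesis on `u` gives
`τ α ‖y - T y‖ ≤ 2 ‖x - u‖`, and the two inequalities chain.
-/

open RealInnerProductSpace

theorem one_sub_mul_norm_sub_le_norm_sub_of_convexComb
    {E : Type*} [SeminormedAddCommGroup E] [NormedSpace ℝ E] {T : E → E} {L α : ℝ} {x y : E}
    (hα : 0 ≤ α) (hy : y = (1 - α) • x + α • T x) (hLip : ‖T y - T x‖ ≤ L * ‖y - x‖) :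
    (1 - (L + 1) * α) * ‖x - T x‖ ≤ ‖y - T y‖ := by
  have hxy : ‖x - y‖ = α * ‖x - T x‖ := by
    rw [show x - y = α • (x - T x) by rw [hy]; module, norm_smul, Real.norm_of_nonneg hα]
  have htri : ‖x - T x‖ ≤ ‖x - y‖ + ‖y - T y‖ + ‖T y - T x‖ := by
    calc ‖x - T x‖ = ‖(x - y) + (y - T y) + (T y - T x)‖ := by abel_nf
      _ ≤ ‖x - y‖ + ‖y - T y‖ + ‖T y - T x‖ := norm_add₃_le
  rw [norm_sub_rev y x, hxy] at hLip
  rw [hxy] at htri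
  linarith

theorem mul_norm_le_two_mul_norm_of_sq_le_inner
    {E : Type*} [NormedAddCommGroup E] [InnerProductSpace ℝ E] {α τ : ℝ} {v w : E}
    (hα : 0 < α) (h : τ * ‖α • v‖ ^ 2 ≤ 2 * α * ⟪w, v⟫) :
    τ * α * ‖v‖ ≤ 2 * ‖w‖ := by
  rcases (norm_nonneg v).eq_or_lt with hv | hv
  · rw [← hv, mul_zero]
    positivity
  have hcs : α * ‖v‖ * (τ * α * ‖v‖) ≤ α * ‖v‖ * (2 * ‖w‖) := by
    calc α * ‖v‖ * (τ * α * ‖v‖) = τ * ‖α • v‖ ^ 2 := by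
          rw [norm_smul, Real.norm_of_nonneg hα.le]; ring
      _ ≤ 2 * α * ⟪w, v⟫ := h
      _ ≤ 2 * α * (‖w‖ * ‖v‖) := by gcongr; exact real_inner_le_norm w v
      _ = α * ‖v‖ * (2 * ‖w‖) := by ring
  exact le_of_mul_le_mul_left hcs (by positivity)

theorem lipschitz_pseudo_contraction_Cx_subset'_general
    {H : Type*} [NormedAddCommGroup H] [InnerProductSpace ℝ H]
    (C : Set H) (hCconv : Convex ℝ C)
    (T : H → H) (hT : ∀ x ∈ C, T x ∈ C)
    (L : ℝ) (hL : 1 ≤ L)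
    (hLip : ∀ x ∈ C, ∀ y ∈ C, ‖T x - T y‖ ≤ L * ‖x - y‖)
    (α τ : ℝ) (hα0 : 0 < α) (hα1 : α < 1 / (L + 1)) (hτ0 : 0 < τ)
    (x : H) (hx : x ∈ C) (y : H) (hy : y = (1 - α) • x + α • T x)
    (u : H)
    (huC : τ * ‖α • (y - T y)‖ ^ 2 ≤ 2 * α * ⟪x - u, y - T y⟫) :
    ‖x - T x‖ ≤ (2 / (τ * α * (1 - (L + 1) * α))) * ‖x - u‖ := by
  have hαL : α * (L + 1) < 1 := (lt_div_iff₀ (by linarith)).mp hα1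
  have hc : 0 < 1 - (L + 1) * α := by linarith
  have hyC : y ∈ C := hy ▸ hCconv hx (hT x hx) (by nlinarith) hα0.le (by ring)
  have hxTx := one_sub_mul_norm_sub_le_norm_sub_of_convexComb hα0.le hy (hLip y hyC x hx)
  have hyTy := mul_norm_le_two_mul_norm_of_sq_le_inner hα0 huC
  rw [div_mul_eq_mul_div, le_div_iff₀ (by positivity)]
  calc ‖x - T x‖ * (τ * α * (1 - (L + 1) * α))
      = τ * α * ((1 - (L + 1) * α) * ‖x - T x‖) := by ring
    _ ≤ τ * α * ‖y - T y‖ := by gcongr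
    _ ≤ 2 * ‖x - u‖ := hyTy

theorem lipschitz_pseudo_contraction_Cx_subset'
    {H : Type*} [NormedAddCommGroup H] [InnerProductSpace ℝ H] [CompleteSpace H]
    (C : Set H) (hC : IsClosed C) (hCconv : Convex ℝ C) (hCne : C.Nonempty)
    (T : H → H) (hT : ∀ x ∈ C, T x ∈ C)
    (L : ℝ) (hL : 1 ≤ L)
    (hLip : ∀ x ∈ C, ∀ y ∈ C, ‖T x - T y‖ ≤ L * ‖x - y‖)
    (hpc : ∀ x ∈ C, ∀ y ∈ C, ⟪T x - T y, x - y⟫ ≤ ‖x - y‖ ^ 2)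
    (hF : ∃ p ∈ C, T p = p)
    (α τ : ℝ) (hα0 : 0 < α) (hα1 : α < 1 / (L + 1)) (hτ0 : 0 < τ) (hτ1 : τ ≤ 1)
    (x : H) (hx : x ∈ C) (y : H) (hy : y = (1 - α) • x + α • T x)
    (u : H) (hu : u ∈ C)
    (huC : τ * ‖α • (y - T y)‖ ^ 2 ≤ 2 * α * ⟪x - u, y - T y⟫) :
    ‖x - T x‖ ≤ (2 / (τ * α * (1 - (L + 1) * α))) * ‖x - u‖ :=
  lipschitz_pseudo_contraction_Cx_subset'_general C hCconv T hT L hL hLip α τ hα0 hα1 hτ0 x hx y hy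
    u huC
end

section
/- Let C be a nonempty closed convex subset of a real Hilbert space H and T : C → C an L-Lipschitz pseudo-contraction with L ≥ 1 and F(T) ≠ ∅. Fix x ∈ C and α, β ∈ (0,1) with β ≤ α < 1/(√(1+L²)+1). Set v = (1−α)x + αTx and y = (1−β)x + βTv. If u ∈ C satisfies ‖y − u‖² ≤ ‖x − u‖² − αβ(1 − 2α − L²α²)‖x − Tx‖², then ‖x − Tx‖ ≤ (2(1+Lα)/(α(1 − 2α − L²α²)))‖x − u‖. -/
theorem ishikawa_lipschitz_pseudo_contraction_estimate
    {H : Type*} [NormedAddCommGroup H] [InnerProductSpace ℝ H] [CompleteSpace H]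
    (C : Set H) (hC : IsClosed C) (hCconv : Convex ℝ C) (hCne : C.Nonempty)
    (T : H → H) (hT : ∀ x ∈ C, T x ∈ C)
    (L : ℝ) (hL : 1 ≤ L)
    (hLip : ∀ x ∈ C, ∀ y ∈ C, ‖T x - T y‖ ≤ L * ‖x - y‖)
    (hpc : ∀ x ∈ C, ∀ y ∈ C, @inner ℝ H _ (T x - T y) (x - y) ≤ ‖x - y‖ ^ 2)
    (hF : ∃ p ∈ C, T p = p)
    (x : H) (hx : x ∈ C)
    (α β : ℝ) (hβ0 : 0 < β) (hβα : β ≤ α)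
    (hα1 : α < 1 / (Real.sqrt (1 + L ^ 2) + 1))
    (v y : H) (hv : v = (1 - α) • x + α • T x) (hy : y = (1 - β) • x + β • T v)
    (u : H) (hu : u ∈ C)
    (huC : ‖y - u‖ ^ 2 ≤
      ‖x - u‖ ^ 2 - α * β * (1 - 2 * α - L ^ 2 * α ^ 2) * ‖x - T x‖ ^ 2) :
    ‖x - T x‖ ≤
      (2 * (1 + L * α) / (α * (1 - 2 * α - L ^ 2 * α ^ 2))) * ‖x - u‖ := by
  have hα0 : 0 < α := lt_of_lt_of_le hβ0 hβα
  set s := Real.sqrt (1 + L ^ 2) with hs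
  have hs0 : 0 ≤ s := Real.sqrt_nonneg _
  have hs2 : s ^ 2 = 1 + L ^ 2 := Real.sq_sqrt (by positivity)
  have hsp : (0:ℝ) < s + 1 := by linarith
  have hαs : α * (s + 1) < 1 := (lt_div_iff₀ hsp).mp hα1
  have hα1' : α < 1 := by nlinarith [mul_nonneg hα0.le hs0]
  have e1 : 0 < 1 - α - α * s := by nlinarith
  have e2 : 0 < 1 - α + α * s := by nlinarith [mul_nonneg hα0.le hs0]
  have hc : 0 < 1 - 2 * α - L ^ 2 * α ^ 2 := by nlinarith [mul_pos e1 e2, hs2]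
  set c := 1 - 2 * α - L ^ 2 * α ^ 2 with hcdef
  have hvC : v ∈ C := by
    rw [hv]
    exact hCconv hx (hT x hx) (by linarith) hα0.le (by ring)
  have hTv : ‖T v - T x‖ ≤ L * ‖v - x‖ := hLip v hvC x hx
  have hvx : ‖v - x‖ = α * ‖x - T x‖ := by
    have h : v - x = α • (T x - x) := by rw [hv]; module
    rw [h, norm_smul, Real.norm_eq_abs, abs_of_pos hα0, norm_sub_rev]
  have hLα : (0:ℝ) < 1 + L * α := by nlinarith
  have hyx : ‖y - x‖ ≤ β * (1 + L * α) * ‖x - T x‖ := by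
    have h1 : y - x = β • (T v - x) := by rw [hy]; module
    calc ‖y - x‖ = β * ‖T v - x‖ := by
          rw [h1, norm_smul, Real.norm_eq_abs, abs_of_pos hβ0]
      _ ≤ β * (‖T v - T x‖ + ‖T x - x‖) := by
          gcongr
          calc ‖T v - x‖ = ‖(T v - T x) + (T x - x)‖ := by abel_nf
            _ ≤ ‖T v - T x‖ + ‖T x - x‖ := norm_add_le _ _
      _ ≤ β * (L * (α * ‖x - T x‖) + ‖x - T x‖) := by
          rw [norm_sub_rev (T x) x]
          gcongr
          exact hTv.trans_eq (by rw [hvx])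
      _ = β * (1 + L * α) * ‖x - T x‖ := by ring
  set d := ‖x - T x‖ with hd
  have hd0 : 0 ≤ d := norm_nonneg _
  have hu0 : 0 ≤ ‖x - u‖ := norm_nonneg _
  have hyu0 : 0 ≤ ‖y - u‖ := norm_nonneg _
  have htri : ‖x - u‖ ≤ ‖x - y‖ + ‖y - u‖ := by
    have := dist_triangle x y u
    simpa [dist_eq_norm] using this
  have hxy : ‖x - y‖ = ‖y - x‖ := norm_sub_rev _ _
  have hq : 0 ≤ α * β * c * d ^ 2 := by positivity
  have hsq : ‖y - u‖ ^ 2 ≤ ‖x - u‖ ^ 2 := by linarith [huC, hq]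
  have hyu_le : ‖y - u‖ ≤ ‖x - u‖ := by
    have := Real.sqrt_le_sqrt hsq
    rwa [Real.sqrt_sq hyu0, Real.sqrt_sq hu0] at this
  have f1 : ‖x - u‖ - ‖y - u‖ ≤ ‖x - y‖ := by linarith
  have f2 : ‖x - u‖ + ‖y - u‖ ≤ 2 * ‖x - u‖ := by linarith
  have fmul : (‖x - u‖ - ‖y - u‖) * (‖x - u‖ + ‖y - u‖) ≤ ‖x - y‖ * (2 * ‖x - u‖) :=
    mul_le_mul f1 f2 (by positivity) (norm_nonneg _)
  have step : ‖x - u‖ ^ 2 - ‖y - u‖ ^ 2 ≤ 2 * ‖x - u‖ * ‖x - y‖ := by linarith [fmul]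
  have hxy' : ‖x - y‖ ≤ β * (1 + L * α) * d := hxy ▸ hyx
  have step2 : 2 * ‖x - u‖ * ‖x - y‖ ≤ 2 * ‖x - u‖ * (β * (1 + L * α) * d) := by
    gcongr
  have hmain : β * (α * c * d ^ 2) ≤ β * (2 * (1 + L * α) * ‖x - u‖ * d) := by
    linarith [huC, step, step2]
  have h1 : α * c * d ^ 2 ≤ 2 * (1 + L * α) * ‖x - u‖ * d :=
    le_of_mul_le_mul_left hmain hβ0
  rw [div_mul_eq_mul_div, le_div_iff₀ (by positivity)]
  rcases eq_or_lt_of_le hd0 with h0 | h0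
  · rw [← h0]
    linarith [mul_nonneg hLα.le hu0]
  · have h2 : d * (α * c * d) ≤ d * (2 * (1 + L * α) * ‖x - u‖) := by linarith [h1]
    have h3 := le_of_mul_le_mul_left h2 h0
    linarith [h3]
end

section
/- Let C be a nonempty closed convex subset of a real Hilbert space H and T : C → C a κ-strict pseudo-contraction (0 ≤ κ < 1) which is L-Lipschitz, with F(T) ≠ ∅. Fix x ∈ C, α with 0 < α < 2/(√(4κL² + (κ+1)²) + (κ+1)) and β with 0 < β ≤ κα + (1−κ). Set v = (1−α)x + αTx and y = (1−β)x + βTv. Then every fixed point p of T satisfies ‖y − p‖² ≤ ‖x − p‖² − αβ[1 − (κ+1)α − κL²α²]‖x − Tx‖². -/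
lemma convex_norm_sq_aux {H : Type*} [NormedAddCommGroup H] [InnerProductSpace ℝ H]
    (t : ℝ) (a b : H) :
    ‖(1 - t) • a + t • b‖ ^ 2 = (1 - t) * ‖a‖ ^ 2 + t * ‖b‖ ^ 2 - t * (1 - t) * ‖a - b‖ ^ 2 := by
  have h : (1 - t) • a + t • b = a - t • (a - b) := by
    rw [smul_sub, sub_smul, one_smul]; abel
  have hb : ‖b‖ ^ 2 = ‖a - (a - b)‖ ^ 2 := by rw [sub_sub_cancel]
  rw [h, hb, norm_sub_sq_real, norm_sub_sq_real, real_inner_smul_right, norm_smul]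
  simp only [Real.norm_eq_abs, mul_pow, sq_abs]
  ring

theorem ishikawa_strict_pseudo_contraction_fixed_point_estimate
    {H : Type*} [NormedAddCommGroup H] [InnerProductSpace ℝ H] [CompleteSpace H]
    (C : Set H) (hC : IsClosed C) (hCconv : Convex ℝ C) (hCne : C.Nonempty)
    (T : H → H) (hT : ∀ x ∈ C, T x ∈ C)
    (κ : ℝ) (hκ0 : 0 ≤ κ) (hκ1 : κ < 1)
    (hspc : ∀ x ∈ C, ∀ y ∈ C,
      ‖T x - T y‖ ^ 2 ≤ ‖x - y‖ ^ 2 + κ * ‖(x - T x) - (y - T y)‖ ^ 2)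
    (L : ℝ) (hLip : ∀ x ∈ C, ∀ y ∈ C, ‖T x - T y‖ ≤ L * ‖x - y‖)
    (hF : ∃ p ∈ C, T p = p)
    (x : H) (hx : x ∈ C)
    (α β : ℝ) (hα0 : 0 < α)
    (hα1 : α < 2 / (Real.sqrt (4 * κ * L ^ 2 + (κ + 1) ^ 2) + (κ + 1)))
    (hβ0 : 0 < β) (hβ1 : β ≤ κ * α + (1 - κ))
    (v y : H) (hv : v = (1 - α) • x + α • T x) (hy : y = (1 - β) • x + β • T v)
    (p : H) (hp : p ∈ C) (hfix : T p = p) :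
    ‖y - p‖ ^ 2 ≤
      ‖x - p‖ ^ 2 -
        α * β * (1 - (κ + 1) * α - κ * L ^ 2 * α ^ 2) * ‖x - T x‖ ^ 2 := by
  -- α < 1
  have hsqrt : κ + 1 ≤ Real.sqrt (4 * κ * L ^ 2 + (κ + 1) ^ 2) := by
    have h1 : ((κ + 1) ^ 2 : ℝ) ≤ 4 * κ * L ^ 2 + (κ + 1) ^ 2 := by
      nlinarith [sq_nonneg L, mul_nonneg hκ0 (sq_nonneg L)]
    calc κ + 1 = Real.sqrt ((κ + 1) ^ 2) := (Real.sqrt_sq (by linarith)).symm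
      _ ≤ _ := Real.sqrt_le_sqrt h1
  have hα1' : α < 1 := by
    have hden : (2 : ℝ) ≤ Real.sqrt (4 * κ * L ^ 2 + (κ + 1) ^ 2) + (κ + 1) := by linarith
    have : 2 / (Real.sqrt (4 * κ * L ^ 2 + (κ + 1) ^ 2) + (κ + 1)) ≤ 1 := by
      rw [div_le_one (by linarith)]; linarith
    linarith
  -- v ∈ C
  have hvC : v ∈ C := by
    rw [hv]
    exact hCconv hx (hT x hx) (by linarith) (le_of_lt hα0) (by ring)
  -- identity for y - p
  have h1 : ‖y - p‖ ^ 2 =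
      (1 - β) * ‖x - p‖ ^ 2 + β * ‖T v - p‖ ^ 2 - β * (1 - β) * ‖x - T v‖ ^ 2 := by
    have hyp : y - p = (1 - β) • (x - p) + β • (T v - p) := by
      rw [hy]; rw [smul_sub, smul_sub, sub_smul, sub_smul, one_smul, one_smul]; abel
    have := convex_norm_sq_aux β (x - p) (T v - p)
    rw [← hyp] at this
    have hab : (x - p) - (T v - p) = x - T v := by abel
    rw [hab] at this; exact this
  -- identity for v - p
  have h2 : ‖v - p‖ ^ 2 =
      (1 - α) * ‖x - p‖ ^ 2 + α * ‖T x - p‖ ^ 2 - α * (1 - α) * ‖x - T x‖ ^ 2 := by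
    have hvp : v - p = (1 - α) • (x - p) + α • (T x - p) := by
      rw [hv]; rw [smul_sub, smul_sub, sub_smul, sub_smul, one_smul, one_smul]; abel
    have := convex_norm_sq_aux α (x - p) (T x - p)
    rw [← hvp] at this
    have hab : (x - p) - (T x - p) = x - T x := by abel
    rw [hab] at this; exact this
  -- identity for v - T v
  have h3 : ‖v - T v‖ ^ 2 =
      (1 - α) * ‖x - T v‖ ^ 2 + α * ‖T x - T v‖ ^ 2 - α * (1 - α) * ‖x - T x‖ ^ 2 := by
    have hvt : v - T v = (1 - α) • (x - T v) + α • (T x - T v) := by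
      rw [hv]; rw [smul_sub, smul_sub, sub_smul, sub_smul, one_smul, one_smul]; abel
    have := convex_norm_sq_aux α (x - T v) (T x - T v)
    rw [← hvt] at this
    have hab : (x - T v) - (T x - T v) = x - T x := by abel
    rw [hab] at this; exact this
  -- pseudo-contraction at (v, p)
  have h4 : ‖T v - p‖ ^ 2 ≤ ‖v - p‖ ^ 2 + κ * ‖v - T v‖ ^ 2 := by
    have := hspc v hvC p hp
    rw [hfix] at this
    simpa using this
  -- pseudo-contraction at (x, p)
  have h5 : ‖T x - p‖ ^ 2 ≤ ‖x - p‖ ^ 2 + κ * ‖x - T x‖ ^ 2 := by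
    have := hspc x hx p hp
    rw [hfix] at this
    simpa using this
  -- Lipschitz bound
  have h6 : ‖T x - T v‖ ^ 2 ≤ L ^ 2 * α ^ 2 * ‖x - T x‖ ^ 2 := by
    have hl := hLip x hx v hvC
    have hxv : x - v = α • (x - T x) := by
      rw [hv]; rw [smul_sub, sub_smul, one_smul]; abel
    have hn : ‖x - v‖ = α * ‖x - T x‖ := by
      rw [hxv, norm_smul, Real.norm_eq_abs, abs_of_pos hα0]
    rw [hn] at hl
    have h2 := pow_le_pow_left₀ (norm_nonneg _) hl 2
    calc ‖T x - T v‖ ^ 2 ≤ (L * (α * ‖x - T x‖)) ^ 2 := h2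
      _ = L ^ 2 * α ^ 2 * ‖x - T x‖ ^ 2 := by ring
  -- combine
  have hD : (0:ℝ) ≤ ‖x - T x‖ ^ 2 := sq_nonneg _
  have hβκ : 0 ≤ 1 - β - κ * (1 - α) := by nlinarith
  have h5' : α * ‖T x - p‖ ^ 2 ≤ α * (‖x - p‖ ^ 2 + κ * ‖x - T x‖ ^ 2) :=
    mul_le_mul_of_nonneg_left h5 hα0.le
  have h6' : κ * α * ‖T x - T v‖ ^ 2 ≤ κ * α * (L ^ 2 * α ^ 2 * ‖x - T x‖ ^ 2) :=
    mul_le_mul_of_nonneg_left h6 (mul_nonneg hκ0 hα0.le)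
  have h3' : κ * ‖v - T v‖ ^ 2 =
      κ * (1 - α) * ‖x - T v‖ ^ 2 + κ * α * ‖T x - T v‖ ^ 2
        - κ * α * (1 - α) * ‖x - T x‖ ^ 2 := by rw [h3]; ring
  have hTvp : ‖T v - p‖ ^ 2 ≤ ‖x - p‖ ^ 2 + κ * (1 - α) * ‖x - T v‖ ^ 2 +
      (κ * α - α * (1 - α) + κ * α * (L ^ 2 * α ^ 2) - κ * α * (1 - α)) * ‖x - T x‖ ^ 2 := by
    linarith [h2, h4, h3', h5', h6']
  have hb : β * ‖T v - p‖ ^ 2 ≤ β * (‖x - p‖ ^ 2 + κ * (1 - α) * ‖x - T v‖ ^ 2 +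
      (κ * α - α * (1 - α) + κ * α * (L ^ 2 * α ^ 2) - κ * α * (1 - α)) * ‖x - T x‖ ^ 2) :=
    mul_le_mul_of_nonneg_left hTvp hβ0.le
  have hWslack : 0 ≤ β * (1 - β - κ * (1 - α)) * ‖x - T v‖ ^ 2 :=
    mul_nonneg (mul_nonneg hβ0.le hβκ) (sq_nonneg _)
  linarith [h1, hb, hWslack]
end

section
/- Let C be a nonempty closed convex subset of a real Hilbert space H and T : C → C a nonexpansive mapping with F(T) ≠ ∅. Fix x ∈ C, α ∈ [0,1], β ∈ (0,1]. Set v = (1−α)x + αTx and y = (1−β)x + βTv. Then every fixed point p of T satisfies ‖y − p‖² ≤ ‖x − p‖² + β(‖v‖² − ‖x‖² + 2⟨x − v, p⟩). -/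
open RealInnerProductSpace

theorem ishikawa_nonexpansive_fixed_point_estimate
    {H : Type*} [NormedAddCommGroup H] [InnerProductSpace ℝ H] [CompleteSpace H]
    (C : Set H) (hC : IsClosed C) (hCconv : Convex ℝ C) (hCne : C.Nonempty)
    (T : H → H) (hT : ∀ x ∈ C, T x ∈ C)
    (hne : ∀ x ∈ C, ∀ y ∈ C, ‖T x - T y‖ ≤ ‖x - y‖)
    (hF : ∃ p ∈ C, T p = p)
    (x : H) (hx : x ∈ C)
    (α β : ℝ) (hα0 : 0 ≤ α) (hα1 : α ≤ 1) (hβ0 : 0 < β) (hβ1 : β ≤ 1)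
    (v y : H) (hv : v = (1 - α) • x + α • T x) (hy : y = (1 - β) • x + β • T v)
    (p : H) (hp : p ∈ C) (hfix : T p = p) :
    ‖y - p‖ ^ 2 ≤
      ‖x - p‖ ^ 2 + β * (‖v‖ ^ 2 - ‖x‖ ^ 2 + 2 * ⟪x - v, p⟫) := by
  have hvC : v ∈ C := by
    rw [hv]
    exact hCconv hx (hT x hx) (by linarith) hα0 (by ring)
  have hTv : ‖T v - p‖ ≤ ‖v - p‖ := by
    have := hne v hvC p hp
    rwa [hfix] at this
  have hyp : y - p = (1 - β) • (x - p) + β • (T v - p) := by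
    rw [hy]; module
  have hkey : ‖y - p‖ ^ 2 ≤ (1 - β) * ‖x - p‖ ^ 2 + β * ‖T v - p‖ ^ 2 := by
    rw [hyp]
    have h1 := norm_add_sq_real ((1 - β) • (x - p)) (β • (T v - p))
    rw [inner_smul_left, inner_smul_right, norm_smul, norm_smul] at h1
    have h2 := real_inner_le_norm (x - p) (T v - p)
    have hb1 : 0 ≤ 1 - β := by linarith
    simp only [Real.norm_eq_abs, abs_of_nonneg hb1, abs_of_nonneg hβ0.le,
      RCLike.ofReal_real_eq_id, id, starRingEnd_apply, star_trivial] at h1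
    rw [h1]
    nlinarith [mul_nonneg (mul_nonneg hβ0.le hb1) (sq_nonneg (‖x - p‖ - ‖T v - p‖)),
      mul_le_mul_of_nonneg_left h2 (mul_nonneg hb1 hβ0.le)]
  have hTv2 : ‖T v - p‖ ^ 2 ≤ ‖v - p‖ ^ 2 := by
    exact pow_le_pow_left₀ (norm_nonneg _) hTv 2
  have hvp : ‖v - p‖ ^ 2 = ‖v‖ ^ 2 - 2 * ⟪v, p⟫ + ‖p‖ ^ 2 := by
    rw [norm_sub_sq_real]
  have hxp : ‖x - p‖ ^ 2 = ‖x‖ ^ 2 - 2 * ⟪x, p⟫ + ‖p‖ ^ 2 := by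
    rw [norm_sub_sq_real]
  have hinn : ⟪x - v, p⟫ = ⟪x, p⟫ - ⟪v, p⟫ := inner_sub_left x v p
  nlinarith [hkey, hTv2]
end

section
/- Let C be a nonempty closed convex subset of a real Hilbert space H and T : C → C nonexpansive with F(T) ≠ ∅. Fix x ∈ C, α ∈ [0,1], β ∈ (0,1]. Set v = (1−α)x + αTx, y = (1−β)x + βTv. If u ∈ C satisfies ‖y − u‖² ≤ ‖x − u‖² + β(‖v‖² − ‖x‖² + 2⟨x − v, u⟩), then β(1−α)‖x − Tx‖ ≤ 3‖x − u‖ + α‖Tx − u‖. -/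
open RealInnerProductSpace

theorem ishikawa_nonexpansive_Cx_subset
    {H : Type*} [NormedAddCommGroup H] [InnerProductSpace ℝ H] [CompleteSpace H]
    (C : Set H) (hC : IsClosed C) (hCconv : Convex ℝ C) (hCne : C.Nonempty)
    (T : H → H) (hT : ∀ x ∈ C, T x ∈ C)
    (hne : ∀ x ∈ C, ∀ y ∈ C, ‖T x - T y‖ ≤ ‖x - y‖)
    (hF : ∃ p ∈ C, T p = p)
    (x : H) (hx : x ∈ C)
    (α β : ℝ) (hα0 : 0 ≤ α) (hα1 : α ≤ 1) (hβ0 : 0 < β) (hβ1 : β ≤ 1)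
    (v y : H) (hv : v = (1 - α) • x + α • T x) (hy : y = (1 - β) • x + β • T v)
    (u : H) (hu : u ∈ C)
    (huC : ‖y - u‖ ^ 2 ≤
      ‖x - u‖ ^ 2 + β * (‖v‖ ^ 2 - ‖x‖ ^ 2 + 2 * ⟪x - v, u⟫)) :
    β * (1 - α) * ‖x - T x‖ ≤ 3 * ‖x - u‖ + α * ‖T x - u‖ := by
  have hvC : v ∈ C := by
    rw [hv]
    exact hCconv hx (hT x hx) (by linarith) hα0 (by ring)
  have hvx : v - x = α • (T x - x) := by rw [hv]; module
  have hnvx : ‖v - x‖ = α * ‖T x - x‖ := by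
    rw [hvx, norm_smul, Real.norm_of_nonneg hα0]
  have hTvTx : ‖T v - T x‖ ≤ α * ‖T x - x‖ := hnvx ▸ hne v hvC x hx
  have hxy : x - y = β • (x - T v) := by rw [hy]; module
  have hnxy : ‖x - y‖ = β * ‖x - T v‖ := by
    rw [hxy, norm_smul, Real.norm_of_nonneg hβ0.le]
  have hrev : ‖T x - x‖ = ‖x - T x‖ := norm_sub_rev _ _
  have htri1 : ‖x - T x‖ ≤ ‖x - T v‖ + ‖T v - T x‖ := by
    calc ‖x - T x‖ = ‖(x - T v) + (T v - T x)‖ := by abel_nf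
    _ ≤ ‖x - T v‖ + ‖T v - T x‖ := norm_add_le _ _
  -- β(1-α)‖x - Tx‖ ≤ β‖x - Tv‖ = ‖x - y‖
  rw [hrev] at hTvTx
  have hc : ‖x - T x‖ ≤ ‖x - T v‖ + α * ‖x - T x‖ := by linarith
  have h3 : β * (1 - α) * ‖x - T x‖ ≤ ‖x - y‖ := by
    rw [hnxy]
    nlinarith [mul_le_mul_of_nonneg_left hc hβ0.le]
  have htri2 : ‖x - y‖ ≤ ‖x - u‖ + ‖y - u‖ := by
    calc ‖x - y‖ = ‖(x - u) - (y - u)‖ := by abel_nf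
    _ ≤ ‖x - u‖ + ‖y - u‖ := norm_sub_le _ _
  -- rewrite the hypothesis
  have hid : ‖v‖ ^ 2 - ‖x‖ ^ 2 + 2 * ⟪x - v, u⟫ = ‖v - u‖ ^ 2 - ‖x - u‖ ^ 2 := by
    rw [@norm_sub_sq_real H, @norm_sub_sq_real H _ _ x u, inner_sub_left]
    ring
  rw [hid] at huC
  have hvu : ‖v - u‖ ≤ (1 - α) * ‖x - u‖ + α * ‖T x - u‖ := by
    have : v - u = (1 - α) • (x - u) + α • (T x - u) := by rw [hv]; module
    rw [this]
    calc ‖(1 - α) • (x - u) + α • (T x - u)‖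
        ≤ ‖(1 - α) • (x - u)‖ + ‖α • (T x - u)‖ := norm_add_le _ _
      _ = (1 - α) * ‖x - u‖ + α * ‖T x - u‖ := by
          rw [norm_smul, norm_smul, Real.norm_of_nonneg (by linarith),
            Real.norm_of_nonneg hα0]
  -- ‖y - u‖ ≤ ‖x - u‖ + α‖Tx - u‖
  set M := ‖x - u‖ + α * ‖T x - u‖ with hM
  have hMnn : 0 ≤ M := by
    have := mul_nonneg hα0 (norm_nonneg (T x - u))
    have := norm_nonneg (x - u)
    positivity
  have hvuM : ‖v - u‖ ≤ M := by
    have : (1 - α) * ‖x - u‖ ≤ ‖x - u‖ := by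
      nlinarith [norm_nonneg (x - u)]
    linarith
  have hxuM : ‖x - u‖ ≤ M := by
    have := mul_nonneg hα0 (norm_nonneg (T x - u))
    linarith
  have hV2 : ‖v - u‖ ^ 2 ≤ M ^ 2 := pow_le_pow_left₀ (norm_nonneg _) hvuM 2
  have hX2 : ‖x - u‖ ^ 2 ≤ M ^ 2 := pow_le_pow_left₀ (norm_nonneg _) hxuM 2
  have hy2 : ‖y - u‖ ^ 2 ≤ M ^ 2 := by
    nlinarith [mul_le_mul_of_nonneg_left hV2 hβ0.le,
      mul_le_mul_of_nonneg_left hX2 (by linarith : (0:ℝ) ≤ 1 - β)]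
  have hyu : ‖y - u‖ ≤ M :=
    (pow_le_pow_iff_left₀ (norm_nonneg _) hMnn two_ne_zero).mp hy2
  have := norm_nonneg (x - u)
  linarith [h3, htri2, hyu]
end

section
/- Let C be a nonempty closed convex subset of a real Hilbert space H and T : C → C nonexpansive with F(T) ≠ ∅. Fix x ∈ C, α ∈ [0,1) and β ∈ (α/(1−α), 1]. Set v = (1−α)x + αTx, y = (1−β)x + βTv. If u ∈ C satisfies ‖y − u‖² ≤ ‖x − u‖² + β(‖v‖² − ‖x‖² + 2⟨x − v, u⟩), then ‖x − Tx‖ ≤ (4/(β(1−α) − α))‖x − u‖. -/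
open RealInnerProductSpace

theorem ishikawa_nonexpansive_Cx_subset'
    {H : Type*} [NormedAddCommGroup H] [InnerProductSpace ℝ H] [CompleteSpace H]
    (C : Set H) (hC : IsClosed C) (hCconv : Convex ℝ C) (hCne : C.Nonempty)
    (T : H → H) (hT : ∀ x ∈ C, T x ∈ C)
    (hne : ∀ x ∈ C, ∀ y ∈ C, ‖T x - T y‖ ≤ ‖x - y‖)
    (hF : ∃ p ∈ C, T p = p)
    (x : H) (hx : x ∈ C)
    (α β : ℝ) (hα0 : 0 ≤ α) (hα1 : α < 1)
    (hβlow : α / (1 - α) < β) (hβ1 : β ≤ 1)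
    (v y : H) (hv : v = (1 - α) • x + α • T x) (hy : y = (1 - β) • x + β • T v)
    (u : H) (hu : u ∈ C)
    (huC : ‖y - u‖ ^ 2 ≤
      ‖x - u‖ ^ 2 + β * (‖v‖ ^ 2 - ‖x‖ ^ 2 + 2 * ⟪x - v, u⟫)) :
    ‖x - T x‖ ≤ (4 / (β * (1 - α) - α)) * ‖x - u‖ := by
  have h1α : (0:ℝ) < 1 - α := by linarith
  have hβ0 : 0 < β := lt_of_le_of_lt (div_nonneg hα0 h1α.le) hβlow
  have hαβ : α < β * (1 - α) := by
    have := (div_lt_iff₀ h1α).mp hβlow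
    linarith
  have hc : 0 < β * (1 - α) - α := by linarith
  have hα2 : α < 1/2 := by nlinarith
  set d := ‖x - T x‖ with hd
  set r := ‖x - u‖ with hr
  have hd0 : 0 ≤ d := norm_nonneg _
  have hr0 : 0 ≤ r := norm_nonneg _
  have hvC : v ∈ C := hv ▸ hCconv hx (hT x hx) (by linarith) hα0 (by ring)
  have hvx : ‖v - x‖ = α * d := by
    have h : v - x = α • (T x - x) := by rw [hv]; module
    rw [h, norm_smul, Real.norm_of_nonneg hα0,
      show T x - x = -(x - T x) by abel, norm_neg]
  have hTvTx : ‖T v - T x‖ ≤ α * d := hvx ▸ hne v hvC x hx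
  have hTvx : (1 - α) * d ≤ ‖T v - x‖ := by
    have h1 : d = ‖(x - T v) + (T v - T x)‖ := by rw [hd]; congr 1; abel
    have h2 : ‖(x - T v) + (T v - T x)‖ ≤ ‖x - T v‖ + ‖T v - T x‖ := norm_add_le _ _
    have h3 : ‖x - T v‖ = ‖T v - x‖ := norm_sub_rev _ _
    nlinarith
  have hyx : ‖y - x‖ = β * ‖T v - x‖ := by
    have h : y - x = β • (T v - x) := by rw [hy]; module
    rw [h, norm_smul, Real.norm_of_nonneg hβ0.le]
  have hyu : β * ((1 - α) * d) - r ≤ ‖y - u‖ := by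
    have h1 : ‖y - x‖ ≤ ‖y - u‖ + ‖u - x‖ := norm_sub_le_norm_sub_add_norm_sub _ _ _
    have h2 : ‖u - x‖ = r := norm_sub_rev _ _
    nlinarith
  have hvu : ‖v - u‖ ≤ α * d + r := by
    have h1 : ‖v - u‖ ≤ ‖v - x‖ + ‖x - u‖ := norm_sub_le_norm_sub_add_norm_sub _ _ _
    linarith
  have hexp : ‖v‖ ^ 2 - ‖x‖ ^ 2 + 2 * ⟪x - v, u⟫ = ‖v - u‖ ^ 2 - r ^ 2 := by
    have h1 := @norm_sub_sq_real H _ _ v u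
    have h2 := @norm_sub_sq_real H _ _ x u
    have h3 : ⟪x - v, u⟫ = ⟪x, u⟫ - ⟪v, u⟫ := inner_sub_left _ _ _
    rw [hr]
    linarith
  rw [hexp] at huC
  rcases le_or_gt (β * ((1 - α) * d) - r) 0 with hcase | hcase
  · rw [div_mul_eq_mul_div, le_div_iff₀ hc]
    nlinarith
  · have hsq1 : (β * ((1 - α) * d) - r) ^ 2 ≤ ‖y - u‖ ^ 2 :=
      pow_le_pow_left₀ hcase.le hyu 2
    have hsq2 : ‖v - u‖ ^ 2 ≤ (α * d + r) ^ 2 :=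
      pow_le_pow_left₀ (norm_nonneg _) hvu 2
    have h5 : β * (‖v - u‖ ^ 2 - r ^ 2) ≤ β * ((α * d + r) ^ 2 - r ^ 2) :=
      mul_le_mul_of_nonneg_left (by linarith) hβ0.le
    have h6 : (β * ((1 - α) * d) - r) ^ 2 ≤ r ^ 2 + β * ((α * d + r) ^ 2 - r ^ 2) := by
      linarith
    have hkey : β * (β * (1 - α) ^ 2 - α ^ 2) * d ^ 2 ≤ 2 * β * d * r := by
      ring_nf at h6 ⊢
      linarith
    have h7 : 0 ≤ (1 - 2 * α) * (β * (1 - α) + α) :=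
      mul_nonneg (by linarith) (by have := mul_nonneg hβ0.le h1α.le; linarith)
    have hhalf : (β * (1 - α) - α) / 2 ≤ β * (1 - α) ^ 2 - α ^ 2 := by ring_nf at h7 ⊢; linarith
    rcases eq_or_lt_of_le hd0 with hd0' | hd0'
    · rw [← hd0']
      positivity
    · rw [div_mul_eq_mul_div, le_div_iff₀ hc]
      have h8 : (β * (1 - α) ^ 2 - α ^ 2) * d ^ 2 ≤ 2 * d * r := by
        have h := hkey
        rw [show β * (β * (1 - α) ^ 2 - α ^ 2) * d ^ 2
              = β * ((β * (1 - α) ^ 2 - α ^ 2) * d ^ 2) by ring,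
            show 2 * β * d * r = β * (2 * d * r) by ring] at h
        exact le_of_mul_le_mul_left h hβ0
      have h9 : (β * (1 - α) - α) / 2 * d ^ 2 ≤ (β * (1 - α) ^ 2 - α ^ 2) * d ^ 2 :=
        mul_le_mul_of_nonneg_right hhalf (sq_nonneg d)
      have h10 : d * (β * (1 - α) - α) * d ≤ 4 * r * d := by
        ring_nf at h8 h9 ⊢
        linarith
      exact le_of_mul_le_mul_right h10 hd0'
end

section
/- Let C be a nonempty closed convex subset of a real Hilbert space H and T : C → C an L-Lipschitz pseudo-contractive mapping with L ≥ 1. Fix x, x₀ ∈ C and α ∈ [0,1], and set y = (1−α)x₀ + αTx and θ = (1−α)(‖x₀‖² − ‖x‖²) + α‖x − Tx‖² − α(1−α)‖x₀ − Tx‖². Then every fixed point p of T satisfies ‖y − p‖² ≤ ‖x − p‖² + 2(1−α)⟨x − x₀, p⟩ + θ. -/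
open RealInnerProductSpace

theorem halpern_pseudo_contraction_fixed_point_estimate
    {H : Type*} [NormedAddCommGroup H] [InnerProductSpace ℝ H] [CompleteSpace H]
    (C : Set H) (hC : IsClosed C) (hCconv : Convex ℝ C) (hCne : C.Nonempty)
    (T : H → H) (hT : ∀ x ∈ C, T x ∈ C)
    (L : ℝ) (hL : 1 ≤ L)
    (hLip : ∀ x ∈ C, ∀ y ∈ C, ‖T x - T y‖ ≤ L * ‖x - y‖)
    (hpc : ∀ x ∈ C, ∀ y ∈ C,
      ‖T x - T y‖ ^ 2 ≤ ‖x - y‖ ^ 2 + ‖(x - T x) - (y - T y)‖ ^ 2)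
    (x x₀ : H) (hx : x ∈ C) (hx₀ : x₀ ∈ C)
    (α : ℝ) (hα0 : 0 ≤ α) (hα1 : α ≤ 1)
    (y : H) (hy : y = (1 - α) • x₀ + α • T x)
    (θ : ℝ)
    (hθ : θ = (1 - α) * (‖x₀‖ ^ 2 - ‖x‖ ^ 2) + α * ‖x - T x‖ ^ 2 -
      α * (1 - α) * ‖x₀ - T x‖ ^ 2)
    (p : H) (hp : p ∈ C) (hfix : T p = p) :
    ‖y - p‖ ^ 2 ≤ ‖x - p‖ ^ 2 + 2 * (1 - α) * ⟪x - x₀, p⟫ + θ := by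
  subst hy hθ
  have hkey := hpc x hx p hp
  rw [hfix] at hkey
  have hsq : ∀ u : H, ‖u‖ ^ 2 = ⟪u, u⟫ := fun u => (real_inner_self_eq_norm_sq u).symm
  simp only [hsq] at hkey ⊢
  simp only [inner_sub_left, inner_sub_right, inner_add_left, inner_add_right,
    inner_smul_left, inner_smul_right, conj_trivial] at hkey ⊢
  nlinarith [hkey, hα0, real_inner_comm x (T x), real_inner_comm x p,
    real_inner_comm x₀ p, real_inner_comm (T x) p, real_inner_comm x x₀,
    real_inner_comm x₀ (T x)]
end

section
/- Let C be a nonempty closed convex subset of a real Hilbert space H and T : C → C a κ-strict pseudo-contraction (0 ≤ κ < 1) with F(T) ≠ ∅. Fix x, x₀ ∈ C, α ∈ [0,1], set y = (1−α)x₀ + αTx and θ = (1−α)(‖x₀‖² − ‖x‖²) + ακ‖x − Tx‖² − α(1−α)‖x₀ − Tx‖². If u ∈ C satisfies ‖y − u‖² ≤ ‖x − u‖² + 2(1−α)⟨x − x₀, u⟩ + θ, then ‖x − Tx‖ ≤ (2/(1 − √(ακ)))‖x − u‖ + (√(1−α)/(1 − √(ακ)))(‖x₀ − Tx‖ + ‖x₀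 − u‖). -/
/-!
Writing `y - u = (1 - α)(x₀ - u) + α(Tx - u)` and expanding, every term of the hypothesis on `u`
cancels except `α‖Tx - u‖² ≤ α(‖x - u‖² + κ‖x - Tx‖²)`. Splitting
`‖Tx - u‖² = α‖Tx - u‖² + (1 - α)‖Tx - u‖²` and bounding `‖Tx - u‖ ≤ ‖x₀ - Tx‖ + ‖x₀ - u‖` gives
`‖Tx - u‖ ≤ ‖x - u‖ + √(ακ)‖x - Tx‖ + √(1 - α)(‖x₀ - Tx‖ + ‖x₀ - u‖)`; combined with
`‖x - Tx‖ ≤ ‖x - u‖ + ‖Tx - u‖`, the term `√(ακ)‖x - Tx‖` is absorbed on the left since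
`√(ακ) < 1`.
-/

open RealInnerProductSpace

section InnerProduct

variable {H : Type*} [NormedAddCommGroup H] [InnerProductSpace ℝ H]

theorem norm_sub_smul_add_smul_sq (a b : H) (α : ℝ) :
    ‖(1 - α) • a + α • b‖ ^ 2 =
      (1 - α) * ‖a‖ ^ 2 + α * ‖b‖ ^ 2 - α * (1 - α) * ‖a - b‖ ^ 2 := by
  simp only [← real_inner_self_eq_norm_sq, inner_add_left, inner_add_right, inner_sub_left,
    inner_sub_right, real_inner_smul_left, real_inner_smul_right, real_inner_comm a b]
  ring

theorem norm_sub_sq_sub_norm_sub_sq (x x₀ u : H) :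
    ‖x₀ - u‖ ^ 2 - ‖x - u‖ ^ 2 = ‖x₀‖ ^ 2 - ‖x‖ ^ 2 + 2 * ⟪x - x₀, u⟫ := by
  rw [norm_sub_sq_real, norm_sub_sq_real, inner_sub_left]
  ring

theorem norm_halpern_step_sub_sq_le_iff (x x₀ v u : H) (α κ : ℝ) :
    ‖((1 - α) • x₀ + α • v) - u‖ ^ 2 ≤ ‖x - u‖ ^ 2 + 2 * (1 - α) * ⟪x - x₀, u⟫ +
        ((1 - α) * (‖x₀‖ ^ 2 - ‖x‖ ^ 2) + α * κ * ‖x - v‖ ^ 2 - α * (1 - α) * ‖x₀ - v‖ ^ 2) ↔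
      α * ‖v - u‖ ^ 2 ≤ α * (‖x - u‖ ^ 2 + κ * ‖x - v‖ ^ 2) := by
  have hy : ((1 - α) • x₀ + α • v) - u = (1 - α) • (x₀ - u) + α • (v - u) := by
    simp only [smul_sub, sub_smul, one_smul]; abel
  have hanchor := congrArg ((1 - α) * ·) (norm_sub_sq_sub_norm_sub_sq x x₀ u)
  rw [hy, norm_sub_smul_add_smul_sq, sub_sub_sub_cancel_right]
  constructor <;> intro h <;> linarith

end InnerProduct

theorem le_add_sqrt_mul_add_sqrt_mul_of_sq_le {w a b c p q : ℝ} (ha : 0 ≤ a) (hb : 0 ≤ b)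
    (hc : 0 ≤ c) (hp : 0 ≤ p) (hq : 0 ≤ q) (h : w ^ 2 ≤ a ^ 2 + p * b ^ 2 + q * c ^ 2) :
    w ≤ a + √p * b + √q * c := by
  have hsum : a ^ 2 + p * b ^ 2 + q * c ^ 2 ≤ (a + √p * b + √q * c) ^ 2 := by
    have := Real.sq_sqrt hp
    have := Real.sq_sqrt hq
    nlinarith [Real.sqrt_nonneg p, Real.sqrt_nonneg q, mul_nonneg (Real.sqrt_nonneg p) hb,
      mul_nonneg (Real.sqrt_nonneg q) hc]
  exact (abs_le_of_sq_le_sq (h.trans hsum) (by positivity)).trans' (le_abs_self w)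

theorem halpern_strict_pseudo_contraction_Cx_subset_general
    {H : Type*} [NormedAddCommGroup H] [InnerProductSpace ℝ H]
    (T : H → H)
    (κ : ℝ) (hκ0 : 0 ≤ κ) (hκ1 : κ < 1)
    (x x₀ : H)
    (α : ℝ) (hα0 : 0 ≤ α) (hα1 : α ≤ 1)
    (y : H) (hy : y = (1 - α) • x₀ + α • T x)
    (θ : ℝ)
    (hθ : θ = (1 - α) * (‖x₀‖ ^ 2 - ‖x‖ ^ 2) + α * κ * ‖x - T x‖ ^ 2 -
      α * (1 - α) * ‖x₀ - T x‖ ^ 2)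
    (u : H)
    (huC : ‖y - u‖ ^ 2 ≤ ‖x - u‖ ^ 2 + 2 * (1 - α) * ⟪x - x₀, u⟫ + θ) :
    ‖x - T x‖ ≤ (2 / (1 - Real.sqrt (α * κ))) * ‖x - u‖ +
      (Real.sqrt (1 - α) / (1 - Real.sqrt (α * κ))) *
        (‖x₀ - T x‖ + ‖x₀ - u‖) := by
  subst hy hθ
  have hcut := (norm_halpern_step_sub_sq_le_iff x x₀ (T x) u α κ).1 huC
  have hTu_le : ‖T x - u‖ ≤ ‖x₀ - T x‖ + ‖x₀ - u‖ := by
    simpa only [norm_sub_rev x₀] using norm_sub_le_norm_sub_add_norm_sub (T x) x₀ u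
  have hTu_sq : ‖T x - u‖ ^ 2 ≤
      ‖x - u‖ ^ 2 + α * κ * ‖x - T x‖ ^ 2 + (1 - α) * (‖x₀ - T x‖ + ‖x₀ - u‖) ^ 2 := by
    have := mul_le_mul_of_nonneg_left (pow_le_pow_left₀ (norm_nonneg _) hTu_le 2)
      (sub_nonneg.2 hα1)
    have := mul_le_of_le_one_left (sq_nonneg ‖x - u‖) hα1
    linarith
  have hTu := le_add_sqrt_mul_add_sqrt_mul_of_sq_le (norm_nonneg _) (norm_nonneg _)
    (by positivity) (mul_nonneg hα0 hκ0) (sub_nonneg.2 hα1) hTu_sq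
  have hs : √(α * κ) < 1 := (Real.sqrt_lt' one_pos).2 <| by
    rw [one_pow]; exact (mul_le_of_le_one_left hκ0 hα1).trans_lt hκ1
  have hd : ‖x - T x‖ ≤ ‖x - u‖ + ‖T x - u‖ := by
    simpa only [norm_sub_rev u] using norm_sub_le_norm_sub_add_norm_sub x u (T x)
  rw [div_mul_eq_mul_div, div_mul_eq_mul_div, ← add_div, le_div_iff₀ (sub_pos.2 hs)]
  linarith

theorem halpern_strict_pseudo_contraction_Cx_subset
    {H : Type*} [NormedAddCommGroup H] [InnerProductSpace ℝ H] [CompleteSpace H]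
    (C : Set H) (hC : IsClosed C) (hCconv : Convex ℝ C) (hCne : C.Nonempty)
    (T : H → H) (hT : ∀ x ∈ C, T x ∈ C)
    (κ : ℝ) (hκ0 : 0 ≤ κ) (hκ1 : κ < 1)
    (hspc : ∀ x ∈ C, ∀ y ∈ C,
      ‖T x - T y‖ ^ 2 ≤ ‖x - y‖ ^ 2 + κ * ‖(x - T x) - (y - T y)‖ ^ 2)
    (hF : ∃ p ∈ C, T p = p)
    (x x₀ : H) (hx : x ∈ C) (hx₀ : x₀ ∈ C)
    (α : ℝ) (hα0 : 0 ≤ α) (hα1 : α ≤ 1)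
    (y : H) (hy : y = (1 - α) • x₀ + α • T x)
    (θ : ℝ)
    (hθ : θ = (1 - α) * (‖x₀‖ ^ 2 - ‖x‖ ^ 2) + α * κ * ‖x - T x‖ ^ 2 -
      α * (1 - α) * ‖x₀ - T x‖ ^ 2)
    (u : H) (hu : u ∈ C)
    (huC : ‖y - u‖ ^ 2 ≤ ‖x - u‖ ^ 2 + 2 * (1 - α) * ⟪x - x₀, u⟫ + θ) :
    ‖x - T x‖ ≤ (2 / (1 - Real.sqrt (α * κ))) * ‖x - u‖ +
      (Real.sqrt (1 - α) / (1 - Real.sqrt (α * κ))) *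
        (‖x₀ - T x‖ + ‖x₀ - u‖) :=
  halpern_strict_pseudo_contraction_Cx_subset_general T κ hκ0 hκ1 x x₀ α hα0 hα1 y hy θ hθ u huC
end

section
/- Let C be a nonempty closed convex subset of a real Hilbert space H and T : C → C nonexpansive with F(T) ≠ ∅. Fix x₀, x ∈ C, α ∈ [0,1], set y = (1−α)x₀ + αTx. If u ∈ C satisfies ‖y − u‖² ≤ ‖x − u‖² + (1−α)(‖x₀‖² + 2⟨x − x₀, u⟩), then ‖x − Tx‖ ≤ 2‖x − u‖ + √(1−α)·(4‖x₀‖ + ‖x₀ − Tx‖ + ‖x − x₀‖ + ‖x₀ − u‖). -/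
open RealInnerProductSpace

theorem halpern_nonexpansive_Cx_subset
    {H : Type*} [NormedAddCommGroup H] [InnerProductSpace ℝ H] [CompleteSpace H]
    (C : Set H) (hC : IsClosed C) (hCconv : Convex ℝ C) (hCne : C.Nonempty)
    (T : H → H) (hT : ∀ x ∈ C, T x ∈ C)
    (hne : ∀ x ∈ C, ∀ y ∈ C, ‖T x - T y‖ ≤ ‖x - y‖)
    (hF : ∃ p ∈ C, T p = p)
    (x₀ x : H) (hx₀ : x₀ ∈ C) (hx : x ∈ C)
    (α : ℝ) (hα0 : 0 ≤ α) (hα1 : α ≤ 1)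
    (y : H) (hy : y = (1 - α) • x₀ + α • T x)
    (u : H) (hu : u ∈ C)
    (huC : ‖y - u‖ ^ 2 ≤
      ‖x - u‖ ^ 2 + (1 - α) * (‖x₀‖ ^ 2 + 2 * ⟪x - x₀, u⟫)) :
    ‖x - T x‖ ≤ 2 * ‖x - u‖ + Real.sqrt (1 - α) *
      (4 * ‖x₀‖ + ‖x₀ - T x‖ + ‖x - x₀‖ + ‖x₀ - u‖) := by
  have hβ0 : (0:ℝ) ≤ 1 - α := by linarith
  set s := Real.sqrt (1 - α) with hs
  have hs0 : 0 ≤ s := Real.sqrt_nonneg _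
  have hs2 : s ^ 2 = 1 - α := Real.sq_sqrt hβ0
  have hs1 : s ≤ 1 := by nlinarith
  have hβs : 1 - α ≤ s := by nlinarith
  have h1 : ‖y - T x‖ = (1 - α) * ‖x₀ - T x‖ := by
    have hyy : y - T x = (1 - α) • (x₀ - T x) := by rw [hy]; module
    rw [hyy, norm_smul, Real.norm_eq_abs, abs_of_nonneg hβ0]
  set M := 2 * ‖x₀‖ + ‖x - x₀‖ + ‖x₀ - u‖ with hM
  have hM0 : 0 ≤ M := by positivity
  have hinner : ⟪x - x₀, u⟫ ≤ ‖x - x₀‖ * ‖u‖ := real_inner_le_norm _ _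
  have hun : ‖u‖ ≤ ‖x₀‖ + ‖x₀ - u‖ := by
    calc ‖u‖ = ‖x₀ - (x₀ - u)‖ := by congr 1; abel
      _ ≤ ‖x₀‖ + ‖x₀ - u‖ := norm_sub_le _ _
  have hK : ‖x₀‖ ^ 2 + 2 * ⟪x - x₀, u⟫ ≤ M ^ 2 := by
    nlinarith [norm_nonneg (x - x₀), norm_nonneg x₀, norm_nonneg (x₀ - u), norm_nonneg u]
  have h2 : ‖y - u‖ ^ 2 ≤ (‖x - u‖ + s * M) ^ 2 := by
    nlinarith [mul_nonneg hs0 hM0, norm_nonneg (x - u), mul_nonneg hβ0 hM0]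
  have h3 : ‖y - u‖ ≤ ‖x - u‖ + s * M := by
    nlinarith [norm_nonneg (y - u), norm_nonneg (x - u), mul_nonneg hs0 hM0]
  have t1 : ‖x - T x‖ ≤ ‖x - u‖ + ‖y - u‖ + ‖y - T x‖ := by
    calc ‖x - T x‖ = ‖(x - u) - (y - u) + (y - T x)‖ := by congr 1; abel
      _ ≤ ‖(x - u) - (y - u)‖ + ‖y - T x‖ := norm_add_le _ _
      _ ≤ ‖x - u‖ + ‖y - u‖ + ‖y - T x‖ := by
          have := norm_sub_le (x - u) (y - u); linarith
  have hTx0 : (0:ℝ) ≤ ‖x₀ - T x‖ := norm_nonneg _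
  nlinarith [mul_le_mul_of_nonneg_right hβs hTx0, mul_nonneg hs0 (norm_nonneg x₀)]
end
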